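/- Well-definedness of the instantaneous location change K_1 (Appendix C): fix η ∈ (0,1/2) and assume there is ρ ∈ (0,1) such that |∂f_z/∂x(ε,x)| ≤ ρ for all z ∈ {0,1}, ε ∈ [η,1/2], x ≥ 0. Let (z_i)_{i≥1} be any binary sequence, and let x_n(ε) and x̂_n(ε) be the iterates driven by the same sequence (z_i) but started from two points x_0, x̂_0 > 0. Then the derivatives in ε of the two orbits asymptotically agree, uniformly in ε: sup_{ε∈[η,1/2]} | x_n′(ε) − x̂_n′(ε) | → 0 as n → ∞. -/

import Mathlib

/-- `f_0(ε,x) = ((1−ε)/ε)·(π_00 x + π_10)/(π_01 x + π_11)`. -/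
noncomputable def f₀ε (π00 π01 π10 π11 : ℝ) (ε x : ℝ) : ℝ :=
  ((1 - ε) / ε) * ((π00 * x + π10) / (π01 * x + π11))

/-- `f_1(ε,x) = (ε/(1−ε))·(π_00 x + π_10)/(π_01 x + π_11)`. -/
noncomputable def f₁ε (π00 π01 π10 π11 : ℝ) (ε x : ℝ) : ℝ :=
  (ε / (1 - ε)) * ((π00 * x + π10) / (π01 * x + π11))

/-- `f_b(ε,x)` for a binary symbol `b`. -/
noncomputable def fbε (π00 π01 π10 π11 : ℝ) (b : Bool) (ε x : ℝ) : ℝ :=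
  if b then f₁ε π00 π01 π10 π11 ε x else f₀ε π00 π01 π10 π11 ε x

/-- The iterates `x_n(ε) = f_{z_n}(ε, x_{n−1}(ε))` started from `x₀`. -/
noncomputable def xIterFrom (π00 π01 π10 π11 : ℝ) (z : ℕ → Bool) (x₀ : ℝ) : ℕ → ℝ → ℝ
  | 0 => fun _ => x₀
  | n + 1 => fun ε => fbε π00 π01 π10 π11 (z (n + 1)) ε (xIterFrom π00 π01 π10 π11 z x₀ n ε)

namespace LCWaux

/-- The `ε`-dependent prefactor. -/
noncomputable def gq (b : Bool) (ε : ℝ) : ℝ := if b then ε / (1 - ε) else (1 - ε) / ε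

/-- Derivative of the prefactor. -/
noncomputable def gq' (b : Bool) (ε : ℝ) : ℝ := if b then 1 / (1 - ε) ^ 2 else -(1 / ε ^ 2)

/-- The Möbius part. -/
noncomputable def hq (π00 π01 π10 π11 x : ℝ) : ℝ := (π00 * x + π10) / (π01 * x + π11)

lemma fbε_eq (π00 π01 π10 π11 : ℝ) (b : Bool) (ε x : ℝ) :
    fbε π00 π01 π10 π11 b ε x = gq b ε * hq π00 π01 π10 π11 x := by
  cases b <;> rfl

lemma gq_hasDerivAt (b : Bool) {ε : ℝ} (h0 : ε ≠ 0) (h1 : ε ≠ 1) :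
    HasDerivAt (gq b) (gq' b ε) ε := by
  cases b
  · have h : HasDerivAt (fun ε : ℝ => (1 - ε) / ε)
        ((-1 * ε - (1 - ε) * 1) / ε ^ 2) ε :=
      ((hasDerivAt_id ε).const_sub 1).div (hasDerivAt_id ε) h0
    have hfun : gq false = fun ε : ℝ => (1 - ε) / ε := by funext t; simp [gq]
    rw [hfun]
    convert h using 1
    simp only [gq', Bool.false_eq_true, if_false, if_true]
    field_simp
    try ring
  · have h1' : (1 : ℝ) - ε ≠ 0 := sub_ne_zero.2 (Ne.symm h1)
    have h : HasDerivAt (fun ε : ℝ => ε / (1 - ε))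
        ((1 * (1 - ε) - ε * (-1)) / (1 - ε) ^ 2) ε :=
      (hasDerivAt_id ε).div ((hasDerivAt_id ε).const_sub 1) h1'
    have hfun : gq true = fun ε : ℝ => ε / (1 - ε) := by funext t; simp [gq]
    rw [hfun]
    convert h using 1
    simp only [gq', Bool.false_eq_true, if_false, if_true]
    field_simp
    try ring

lemma hq_hasDerivAt (π00 π01 π10 π11 : ℝ) {x : ℝ} (hden : π01 * x + π11 ≠ 0) :
    HasDerivAt (fun y => hq π00 π01 π10 π11 y)
      ((π00 * π11 - π01 * π10) / (π01 * x + π11) ^ 2) x := by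
  have h : HasDerivAt (fun y : ℝ => (π00 * y + π10) / (π01 * y + π11))
      ((π00 * 1 * (π01 * x + π11) - (π00 * x + π10) * (π01 * 1)) / (π01 * x + π11) ^ 2) x :=
    (((hasDerivAt_id x).const_mul π00).add_const π10).div
      (((hasDerivAt_id x).const_mul π01).add_const π11) hden
  convert h using 1
  · rfl
  field_simp
  try ring

lemma fb_hasDerivAt_x (π00 π01 π10 π11 : ℝ) (b : Bool) (ε : ℝ) {x : ℝ}
    (hden : π01 * x + π11 ≠ 0) :
    HasDerivAt (fun y => fbε π00 π01 π10 π11 b ε y)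
      (gq b ε * ((π00 * π11 - π01 * π10) / (π01 * x + π11) ^ 2)) x := by
  simp only [fbε_eq]
  exact (hq_hasDerivAt π00 π01 π10 π11 hden).const_mul (gq b ε)

section
variable {π00 π01 π10 π11 : ℝ}

lemma den_pos (h01 : 0 < π01) (h11 : 0 < π11) {x : ℝ} (hx : 0 ≤ x) :
    0 < π01 * x + π11 := by nlinarith

lemma den_ge (h01 : 0 < π01) {x : ℝ} (hx : 0 ≤ x) : π11 ≤ π01 * x + π11 := by nlinarith

lemma hq_pos (h00 : 0 < π00) (h01 : 0 < π01) (h10 : 0 < π10) (h11 : 0 < π11)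
    {x : ℝ} (hx : 0 ≤ x) : 0 < hq π00 π01 π10 π11 x :=
  div_pos (by nlinarith) (den_pos h01 h11 hx)

lemma hq_le_K (h00 : 0 < π00) (h01 : 0 < π01) (h10 : 0 < π10) (h11 : 0 < π11)
    {x : ℝ} (hx : 0 ≤ x) : hq π00 π01 π10 π11 x ≤ π00 / π01 + π10 / π11 := by
  rw [hq, div_le_iff₀ (den_pos h01 h11 hx)]
  have e1 : π00 * x ≤ π00 / π01 * (π01 * x + π11) := by
    rw [div_mul_eq_mul_div, le_div_iff₀ h01]; nlinarith [mul_nonneg (mul_nonneg h00.le h01.le) hx]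
  have e2 : π10 ≤ π10 / π11 * (π01 * x + π11) := by
    rw [div_mul_eq_mul_div, le_div_iff₀ h11]; nlinarith [mul_nonneg (mul_nonneg h10.le h01.le) hx]
  nlinarith

lemma hq_sub (h01 : 0 < π01) (h11 : 0 < π11) {u v : ℝ} (hu : 0 ≤ u) (hv : 0 ≤ v) :
    hq π00 π01 π10 π11 u - hq π00 π01 π10 π11 v =
      (π00 * π11 - π01 * π10) * (u - v) / ((π01 * u + π11) * (π01 * v + π11)) := by
  have h1 := (den_pos h01 h11 hu).ne'
  have h2 := (den_pos h01 h11 hv).ne'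
  rw [hq, hq]
  field_simp
  ring

lemma hq_lip (h01 : 0 < π01) (h11 : 0 < π11) (hdt : 0 < π00 * π11 - π01 * π10)
    {u v : ℝ} (hu : 0 ≤ u) (hv : 0 ≤ v) :
    |hq π00 π01 π10 π11 u - hq π00 π01 π10 π11 v| ≤
      (π00 * π11 - π01 * π10) / π11 ^ 2 * |u - v| := by
  have h1 := den_pos h01 h11 hu
  have h2 := den_pos h01 h11 hv
  have g1 := den_ge (π11 := π11) h01 hu
  have g2 := den_ge (π11 := π11) h01 hv
  rw [hq_sub h01 h11 hu hv, abs_div, abs_mul,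
    abs_of_pos hdt, abs_of_pos (mul_pos h1 h2), div_mul_eq_mul_div, div_le_div_iff₀
      (mul_pos h1 h2) (by positivity)]
  have hbase : π11 ^ 2 ≤ (π01 * u + π11) * (π01 * v + π11) := by nlinarith
  exact mul_le_mul_of_nonneg_left hbase (by positivity)

lemma hq'_lip (h01 : 0 < π01) (h11 : 0 < π11) (hdt : 0 < π00 * π11 - π01 * π10)
    {u v : ℝ} (hu : 0 ≤ u) (hv : 0 ≤ v) :
    |(π00 * π11 - π01 * π10) / (π01 * u + π11) ^ 2 -
      (π00 * π11 - π01 * π10) / (π01 * v + π11) ^ 2| ≤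
      2 * (π00 * π11 - π01 * π10) * π01 / π11 ^ 3 * |u - v| := by
  have h1 := den_pos h01 h11 hu
  have h2 := den_pos h01 h11 hv
  have g1 := den_ge (π11 := π11) h01 hu
  have g2 := den_ge (π11 := π11) h01 hv
  set a := π01 * u + π11 with ha
  set b := π01 * v + π11 with hb
  have e : (π00 * π11 - π01 * π10) / a ^ 2 - (π00 * π11 - π01 * π10) / b ^ 2 =
      (π00 * π11 - π01 * π10) * π01 * (v - u) * (a + b) / (a ^ 2 * b ^ 2) := by
    field_simp
    ring
  have e2 : 2 * (π00 * π11 - π01 * π10) * π01 / π11 ^ 3 * |u - v| =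
      2 * (π00 * π11 - π01 * π10) * π01 * |u - v| / π11 ^ 3 := by ring
  rw [e, e2, abs_div, abs_mul, abs_mul, abs_mul, abs_of_pos hdt, abs_of_pos h01,
    abs_of_pos (by positivity : (0:ℝ) < a + b), abs_of_pos (by positivity : (0:ℝ) < a ^ 2 * b ^ 2),
    abs_sub_comm v u, div_le_div_iff₀ (by positivity) (by positivity)]
  have hb2 : π11 ^ 2 ≤ b ^ 2 := by nlinarith
  have ha2 : π11 ^ 2 ≤ a ^ 2 := by nlinarith
  have k1 := mul_le_mul_of_nonneg_left (mul_le_mul g1 hb2 (by positivity) h1.le) h1.le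
  have k2 := mul_le_mul_of_nonneg_left (mul_le_mul g2 ha2 (by positivity) h2.le) h2.le
  have key : π11 ^ 3 * (a + b) ≤ 2 * (a ^ 2 * b ^ 2) := by nlinarith [k1, k2]
  have hnn : 0 ≤ (π00 * π11 - π01 * π10) * π01 * |u - v| := by positivity
  nlinarith [mul_le_mul_of_nonneg_left key hnn]

end

section
variable {η ε : ℝ}

lemma gq_pos (b : Bool) (hη0 : 0 < η) (hε : ε ∈ Set.Icc η (1 / 2 : ℝ)) : 0 < gq b ε := by
  obtain ⟨l, r⟩ := hε
  have h0 : 0 < ε := lt_of_lt_of_le hη0 l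
  have h1 : 0 < 1 - ε := by linarith
  cases b <;> simp [gq] <;> positivity

lemma gq_le (b : Bool) (hη0 : 0 < η) (hη : η < 1 / 2) (hε : ε ∈ Set.Icc η (1 / 2 : ℝ)) :
    gq b ε ≤ (1 - η) / η := by
  obtain ⟨l, r⟩ := hε
  have h0 : 0 < ε := lt_of_lt_of_le hη0 l
  have h1 : 0 < 1 - ε := by linarith
  cases b <;> simp only [gq, if_true, if_false, Bool.false_eq_true]
  · rw [div_le_div_iff₀ h0 hη0]; nlinarith
  · rw [div_le_div_iff₀ h1 hη0]; nlinarith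

lemma gq'_abs (b : Bool) (hη0 : 0 < η) (hη : η < 1 / 2) (hε : ε ∈ Set.Icc η (1 / 2 : ℝ)) :
    |gq' b ε| ≤ 1 / η ^ 2 := by
  obtain ⟨l, r⟩ := hε
  have h0 : 0 < ε := lt_of_lt_of_le hη0 l
  have h1 : 0 < 1 - ε := by linarith
  cases b <;> simp only [gq', if_true, if_false, Bool.false_eq_true]
  · rw [abs_neg, abs_of_pos (by positivity)]
    rw [div_le_div_iff₀ (by positivity) (by positivity)]
    nlinarith
  · rw [abs_of_pos (by positivity)]
    rw [div_le_div_iff₀ (by positivity) (by positivity)]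
    nlinarith
end

end LCWaux

open Filter Topology LCWaux in
set_option maxHeartbeats 1600000 in
/-- Appendix C: well-definedness of the instantaneous location change `K₁`.  If the maps
`x ↦ f_z(ε,x)` are uniform `ρ`-contractions (`ρ < 1`) for `ε ∈ [η, 1/2]`, then for two
orbits driven by the same symbol sequence but started at `x₀, y₀ > 0`, the
`ε`-derivatives of the orbits agree asymptotically, uniformly in `ε ∈ [η, 1/2]`. -/
theorem location_change_well_defined (π00 π01 π10 π11 : ℝ)
    (h00 : 0 < π00) (h01 : 0 < π01) (h10 : 0 < π10) (h11 : 0 < π11)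
    (hrow0 : π00 + π01 = 1) (hrow1 : π10 + π11 = 1)
    (hdet : 0 < π00 * π11 - π01 * π10)
    (η : ℝ) (hη0 : 0 < η) (hη : η < 1 / 2)
    (ρ : ℝ) (hρ0 : 0 < ρ) (hρ1 : ρ < 1)
    (hcontr : ∀ b : Bool, ∀ ε ∈ Set.Icc η (1 / 2 : ℝ), ∀ x : ℝ, 0 ≤ x →
      |deriv (fun y => fbε π00 π01 π10 π11 b ε y) x| ≤ ρ)
    (z : ℕ → Bool) (x₀ y₀ : ℝ) (hx₀ : 0 < x₀) (hy₀ : 0 < y₀) :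
    TendstoUniformlyOn
      (fun n ε => deriv (xIterFrom π00 π01 π10 π11 z x₀ n) ε -
        deriv (xIterFrom π00 π01 π10 π11 z y₀ n) ε)
      0 atTop (Set.Icc η (1 / 2 : ℝ)) := by
  set dt := π00 * π11 - π01 * π10 with hdtdef
  set K := π00 / π01 + π10 / π11 with hKdef
  set G := (1 - η) / η with hGdef
  set Gd := 1 / η ^ 2 with hGddef
  set Lh := dt / π11 ^ 2 with hLhdef
  set Lh' := 2 * dt * π01 / π11 ^ 3 with hLh'def
  set Δ := |x₀ - y₀| with hΔdef
  set B := Gd * K / (1 - ρ) with hBdef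
  set C := (Gd * Lh + G * Lh' * B) / ρ with hCdef
  have hKpos : 0 < K := by rw [hKdef]; positivity
  have hGpos : 0 < G := by rw [hGdef]; apply div_pos <;> linarith
  have hGdpos : 0 < Gd := by rw [hGddef]; positivity
  have hLhpos : 0 < Lh := by rw [hLhdef]; positivity
  have hLh'pos : 0 < Lh' := by rw [hLh'def]; positivity
  have h1ρ : 0 < 1 - ρ := by linarith
  have hBpos : 0 < B := by rw [hBdef]; positivity
  have hCpos : 0 < C := by rw [hCdef]; positivity
  -- the translated contraction hypothesis
  have hcontr' : ∀ b : Bool, ∀ ε ∈ Set.Icc η (1 / 2 : ℝ), ∀ x : ℝ, 0 ≤ x →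
      |gq b ε * (dt / (π01 * x + π11) ^ 2)| ≤ ρ := by
    intro b ε hε x hx
    have := hcontr b ε hε x hx
    rwa [(fb_hasDerivAt_x π00 π01 π10 π11 b ε (den_pos h01 h11 hx).ne').deriv] at this
  -- iterates stay positive
  have pos : ∀ w : ℝ, 0 < w → ∀ ε ∈ Set.Icc η (1 / 2 : ℝ), ∀ n,
      0 < xIterFrom π00 π01 π10 π11 z w n ε := by
    intro w hw ε hε n
    induction n with
    | zero => exact hw
    | succ n ih =>
      rw [show xIterFrom π00 π01 π10 π11 z w (n + 1) ε
          = fbε π00 π01 π10 π11 (z (n + 1)) ε (xIterFrom π00 π01 π10 π11 z w n ε) from rfl,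
        fbε_eq]
      exact mul_pos (gq_pos _ hη0 hε) (hq_pos h00 h01 h10 h11 ih.le)
  -- orbits contract towards each other
  have contr : ∀ ε ∈ Set.Icc η (1 / 2 : ℝ), ∀ n,
      |xIterFrom π00 π01 π10 π11 z x₀ n ε - xIterFrom π00 π01 π10 π11 z y₀ n ε|
        ≤ ρ ^ n * Δ := by
    intro ε hε n
    induction n with
    | zero => rw [pow_zero, one_mul]; exact le_of_eq rfl
    | succ n ih =>
      set u := xIterFrom π00 π01 π10 π11 z x₀ n ε with hu_def
      set v := xIterFrom π00 π01 π10 π11 z y₀ n ε with hv_def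
      have hu : 0 < u := pos x₀ hx₀ ε hε n
      have hv : 0 < v := pos y₀ hy₀ ε hε n
      have du := den_pos h01 h11 hu.le
      have dv := den_pos h01 h11 hv.le
      have hgq := gq_pos (z (n + 1)) hη0 hε
      rw [show xIterFrom π00 π01 π10 π11 z x₀ (n + 1) ε
          = fbε π00 π01 π10 π11 (z (n + 1)) ε u from rfl,
        show xIterFrom π00 π01 π10 π11 z y₀ (n + 1) ε
          = fbε π00 π01 π10 π11 (z (n + 1)) ε v from rfl, fbε_eq, fbε_eq,
        ← mul_sub, hq_sub h01 h11 hu.le hv.le]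
      have hA := hcontr' (z (n + 1)) ε hε u hu.le
      have hB2 := hcontr' (z (n + 1)) ε hε v hv.le
      rw [abs_of_pos (by positivity : (0:ℝ) < gq (z (n+1)) ε * (dt / (π01*u+π11)^2))] at hA
      rw [abs_of_pos (by positivity : (0:ℝ) < gq (z (n+1)) ε * (dt / (π01*v+π11)^2))] at hB2
      have key : gq (z (n + 1)) ε * (dt / ((π01 * u + π11) * (π01 * v + π11))) ≤ ρ := by
        set s := gq (z (n + 1)) ε * (dt / ((π01 * u + π11) * (π01 * v + π11))) with hs
        have hspos : 0 < s := by rw [hs]; positivity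
        have hsq : s ^ 2 = (gq (z (n+1)) ε * (dt / (π01*u+π11)^2)) *
            (gq (z (n+1)) ε * (dt / (π01*v+π11)^2)) := by
          rw [hs]; field_simp
        nlinarith [mul_pos hgq (div_pos hdet (pow_pos du 2))]
      calc |gq (z (n + 1)) ε * (dt * (u - v) / ((π01 * u + π11) * (π01 * v + π11)))|
          = gq (z (n + 1)) ε * (dt / ((π01 * u + π11) * (π01 * v + π11))) * |u - v| := by
            rw [abs_mul, abs_of_pos hgq, abs_div, abs_mul, abs_of_pos hdet,
              abs_of_pos (mul_pos du dv)]
            ring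
        _ ≤ ρ * (ρ ^ n * Δ) := by
            apply mul_le_mul key ih (abs_nonneg _) hρ0.le
        _ = ρ ^ (n + 1) * Δ := by rw [pow_succ]; ring
  -- arithmetic identities for the constants
  have hBeq : Gd * K + ρ * B = B := by
    rw [hBdef]; field_simp; ring
  have hCeq : ρ * C = Gd * Lh + G * Lh' * B := by
    rw [hCdef]; field_simp
  -- the main induction
  have key : ∀ n : ℕ, ∀ ε ∈ Set.Icc η (1 / 2 : ℝ), ∃ dx dy : ℝ,
      HasDerivAt (xIterFrom π00 π01 π10 π11 z x₀ n) dx ε ∧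
      HasDerivAt (xIterFrom π00 π01 π10 π11 z y₀ n) dy ε ∧
      |dx| ≤ B ∧ |dy| ≤ B ∧ |dx - dy| ≤ C * n * ρ ^ n * Δ := by
    intro n
    induction n with
    | zero =>
      intro ε hε
      refine ⟨0, 0, hasDerivAt_const ε x₀, hasDerivAt_const ε y₀, ?_, ?_, ?_⟩ <;> simp
      · exact hBpos.le
      · exact hBpos.le
    | succ n ih =>
      intro ε hε
      obtain ⟨dx, dy, hdx, hdy, hdxB, hdyB, hD⟩ := ih ε hε
      obtain ⟨l, r⟩ := hε
      have hε' : ε ∈ Set.Icc η (1/2 : ℝ) := ⟨l, r⟩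
      have hne0 : ε ≠ 0 := (lt_of_lt_of_le hη0 l).ne'
      have hne1 : ε ≠ 1 := by intro h; rw [h] at r; norm_num at r
      set b := z (n + 1) with hbdef
      set u := xIterFrom π00 π01 π10 π11 z x₀ n ε with hu_def
      set v := xIterFrom π00 π01 π10 π11 z y₀ n ε with hv_def
      have hu : 0 < u := pos x₀ hx₀ ε hε' n
      have hv : 0 < v := pos y₀ hy₀ ε hε' n
      have du := den_pos h01 h11 hu.le
      have dv := den_pos h01 h11 hv.le
      have hXfunx : xIterFrom π00 π01 π10 π11 z x₀ (n + 1)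
          = fun ε => gq b ε * hq π00 π01 π10 π11 (xIterFrom π00 π01 π10 π11 z x₀ n ε) := by
        funext t
        rw [show xIterFrom π00 π01 π10 π11 z x₀ (n + 1) t
            = fbε π00 π01 π10 π11 b t (xIterFrom π00 π01 π10 π11 z x₀ n t) from rfl, fbε_eq]
      have hXfuny : xIterFrom π00 π01 π10 π11 z y₀ (n + 1)
          = fun ε => gq b ε * hq π00 π01 π10 π11 (xIterFrom π00 π01 π10 π11 z y₀ n ε) := by
        funext t
        rw [show xIterFrom π00 π01 π10 π11 z y₀ (n + 1) t
            = fbε π00 π01 π10 π11 b t (xIterFrom π00 π01 π10 π11 z y₀ n t) from rfl, fbε_eq]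
      have hdx' : HasDerivAt (xIterFrom π00 π01 π10 π11 z x₀ (n + 1))
          (gq' b ε * hq π00 π01 π10 π11 u + gq b ε * (dt / (π01 * u + π11) ^ 2 * dx)) ε := by
        rw [hXfunx]
        exact (gq_hasDerivAt b hne0 hne1).mul
          (HasDerivAt.comp ε (hq_hasDerivAt π00 π01 π10 π11 du.ne') hdx)
      have hdy' : HasDerivAt (xIterFrom π00 π01 π10 π11 z y₀ (n + 1))
          (gq' b ε * hq π00 π01 π10 π11 v + gq b ε * (dt / (π01 * v + π11) ^ 2 * dy)) ε := by
        rw [hXfuny]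
        exact (gq_hasDerivAt b hne0 hne1).mul
          (HasDerivAt.comp ε (hq_hasDerivAt π00 π01 π10 π11 dv.ne') hdy)
      refine ⟨_, _, hdx', hdy', ?_, ?_, ?_⟩
      · calc |gq' b ε * hq π00 π01 π10 π11 u + gq b ε * (dt / (π01 * u + π11) ^ 2 * dx)|
            ≤ |gq' b ε * hq π00 π01 π10 π11 u|
              + |gq b ε * (dt / (π01 * u + π11) ^ 2 * dx)| := abs_add_le _ _
          _ ≤ Gd * K + ρ * B := by
              apply add_le_add
              · rw [abs_mul]
                exact mul_le_mul (gq'_abs b hη0 hη hε') (by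
                  rw [abs_of_pos (hq_pos h00 h01 h10 h11 hu.le)]
                  exact hq_le_K h00 h01 h10 h11 hu.le) (abs_nonneg _) hGdpos.le
              · rw [← mul_assoc, abs_mul]
                exact mul_le_mul (hcontr' b ε hε' u hu.le) hdxB (abs_nonneg _) hρ0.le
          _ = B := hBeq
      · calc |gq' b ε * hq π00 π01 π10 π11 v + gq b ε * (dt / (π01 * v + π11) ^ 2 * dy)|
            ≤ |gq' b ε * hq π00 π01 π10 π11 v|
              + |gq b ε * (dt / (π01 * v + π11) ^ 2 * dy)| := abs_add_le _ _
          _ ≤ Gd * K + ρ * B := by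
              apply add_le_add
              · rw [abs_mul]
                exact mul_le_mul (gq'_abs b hη0 hη hε') (by
                  rw [abs_of_pos (hq_pos h00 h01 h10 h11 hv.le)]
                  exact hq_le_K h00 h01 h10 h11 hv.le) (abs_nonneg _) hGdpos.le
              · rw [← mul_assoc, abs_mul]
                exact mul_le_mul (hcontr' b ε hε' v hv.le) hdyB (abs_nonneg _) hρ0.le
          _ = B := hBeq
      · have hdiff : (gq' b ε * hq π00 π01 π10 π11 u + gq b ε * (dt / (π01 * u + π11) ^ 2 * dx))
            - (gq' b ε * hq π00 π01 π10 π11 v + gq b ε * (dt / (π01 * v + π11) ^ 2 * dy))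
            = gq' b ε * (hq π00 π01 π10 π11 u - hq π00 π01 π10 π11 v)
              + (gq b ε * (dt / (π01 * u + π11) ^ 2)) * (dx - dy)
              + gq b ε * (dt / (π01 * u + π11) ^ 2 - dt / (π01 * v + π11) ^ 2) * dy := by
          ring
        rw [hdiff]
        have hcn := contr ε hε' n
        have t1 : |gq' b ε * (hq π00 π01 π10 π11 u - hq π00 π01 π10 π11 v)|
            ≤ Gd * (Lh * (ρ ^ n * Δ)) := by
          rw [abs_mul]
          refine mul_le_mul (gq'_abs b hη0 hη hε') ?_ (abs_nonneg _) hGdpos.le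
          calc |hq π00 π01 π10 π11 u - hq π00 π01 π10 π11 v| ≤ Lh * |u - v| :=
                hq_lip h01 h11 hdet hu.le hv.le
            _ ≤ Lh * (ρ ^ n * Δ) := mul_le_mul_of_nonneg_left hcn hLhpos.le
        have t2 : |(gq b ε * (dt / (π01 * u + π11) ^ 2)) * (dx - dy)|
            ≤ ρ * (C * ↑n * ρ ^ n * Δ) := by
          rw [abs_mul]
          exact mul_le_mul (hcontr' b ε hε' u hu.le) hD (abs_nonneg _) hρ0.le
        have t3 : |gq b ε * (dt / (π01 * u + π11) ^ 2 - dt / (π01 * v + π11) ^ 2) * dy|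
            ≤ G * (Lh' * (ρ ^ n * Δ)) * B := by
          rw [abs_mul, abs_mul]
          refine mul_le_mul (mul_le_mul ?_ ?_ (abs_nonneg _) hGpos.le) hdyB (abs_nonneg _)
            (by positivity)
          · rw [abs_of_pos (gq_pos b hη0 hε')]
            exact gq_le b hη0 hη hε'
          · calc |dt / (π01 * u + π11) ^ 2 - dt / (π01 * v + π11) ^ 2| ≤ Lh' * |u - v| :=
                  hq'_lip h01 h11 hdet hu.le hv.le
              _ ≤ Lh' * (ρ ^ n * Δ) := mul_le_mul_of_nonneg_left hcn hLh'pos.le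
        calc |gq' b ε * (hq π00 π01 π10 π11 u - hq π00 π01 π10 π11 v)
              + (gq b ε * (dt / (π01 * u + π11) ^ 2)) * (dx - dy)
              + gq b ε * (dt / (π01 * u + π11) ^ 2 - dt / (π01 * v + π11) ^ 2) * dy|
            ≤ |gq' b ε * (hq π00 π01 π10 π11 u - hq π00 π01 π10 π11 v)
                + (gq b ε * (dt / (π01 * u + π11) ^ 2)) * (dx - dy)|
              + |gq b ε * (dt / (π01 * u + π11) ^ 2 - dt / (π01 * v + π11) ^ 2) * dy| :=
              abs_add_le _ _
          _ ≤ |gq' b ε * (hq π00 π01 π10 π11 u - hq π00 π01 π10 π11 v)|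
              + |(gq b ε * (dt / (π01 * u + π11) ^ 2)) * (dx - dy)|
              + |gq b ε * (dt / (π01 * u + π11) ^ 2 - dt / (π01 * v + π11) ^ 2) * dy| := by
              exact add_le_add (abs_add_le _ _) le_rfl
          _ ≤ Gd * (Lh * (ρ ^ n * Δ)) + ρ * (C * ↑n * ρ ^ n * Δ) + G * (Lh' * (ρ ^ n * Δ)) * B :=
              add_le_add (add_le_add t1 t2) t3
          _ = C * ↑(n + 1) * ρ ^ (n + 1) * Δ := by
              have harith : ∀ c gd lh g lh' bb dd : ℝ, ρ * c = gd * lh + g * lh' * bb →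
                  gd * (lh * (ρ ^ n * dd)) + ρ * (c * ↑n * ρ ^ n * dd)
                    + g * (lh' * (ρ ^ n * dd)) * bb = c * (↑n + 1) * ρ ^ (n + 1) * dd := by
                intro c gd lh g lh' bb dd hc
                rw [pow_succ]
                first
                  | linear_combination (ρ ^ n * dd) * hc
                  | linear_combination (-(ρ ^ n * dd)) * hc
              push_cast
              exact harith C Gd Lh G Lh' B Δ hCeq
  -- conclude uniform convergence
  rw [Metric.tendstoUniformlyOn_iff]
  intro δ hδ
  have hT : Tendsto (fun n : ℕ => (C * Δ) * (↑n * ρ ^ n)) atTop (𝓝 0) := by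
    have := (tendsto_self_mul_const_pow_of_lt_one hρ0.le hρ1).const_mul (C * Δ)
    simpa using this
  filter_upwards [hT.eventually (gt_mem_nhds hδ)] with n hn ε hε
  obtain ⟨dx, dy, hdx, hdy, _, _, hD⟩ := key n ε hε
  have e1 : deriv (xIterFrom π00 π01 π10 π11 z x₀ n) ε = dx := hdx.deriv
  have e2 : deriv (xIterFrom π00 π01 π10 π11 z y₀ n) ε = dy := hdy.deriv
  calc dist ((0 : ℝ → ℝ) ε)
        (deriv (xIterFrom π00 π01 π10 π11 z x₀ n) ε - deriv (xIterFrom π00 π01 π10 π11 z y₀ n) ε)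
      = |dx - dy| := by
        rw [Real.dist_eq, e1, e2, Pi.zero_apply, zero_sub, abs_neg]
    _ ≤ C * ↑n * ρ ^ n * Δ := hD
    _ = (C * Δ) * (↑n * ρ ^ n) := by ring
    _ < δ := hn
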